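/- arXiv:2103.07275 — 2 statements merged into one kernel-verified Lean document; each statement's English description precedes it below -/
import Mathlib

section
/- Let K* = Pᶠ·Hᵀ·(H·Pᶠ·Hᵀ + R)⁻¹ be the Kalman gain. Then for every n×m real matrix K, det(Pᵃ(K*)) ≤ det(Pᵃ(K)); that is, the Kalman gain minimizes the generalized variance (the determinant of the analysis error covariance matrix) over all gain matrices. -/
/-!
Completing the square: with `S = H Pᶠ Hᵀ + R` and `K* S = Pᶠ Hᵀ`, the Joseph form expands to
`Pᵃ(K) = Pᵃ(K*) + (K - K*) S (K - K*)ᵀ`, a positive semidefinite matrix plus a positive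
semidefinite correction. The determinant is monotone under such corrections: for invertible `A`
the matrix determinant lemma gives `det (A + Cᴴ C) = det A * det (1 + C A⁻¹ Cᴴ)`, and the last
factor is at least `1` since the eigenvalues of `C A⁻¹ Cᴴ` are nonnegative.
-/

open Matrix
open scoped ComplexOrder MatrixOrder

section DetMonotone

variable {𝕜 n : Type*} [RCLike 𝕜] [Fintype n] [DecidableEq n]

lemma Matrix.PosSemidef.one_le_det_one_add {M : Matrix n n 𝕜} (hM : M.PosSemidef) :
    1 ≤ (1 + M).det := by
  have h : 1 + M = cfc (fun x : ℝ => 1 + x) M := by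
    rw [cfc_add .., cfc_const_one .., cfc_id' ..]
  rw [h, hM.1.cfc_eq]
  simp only [IsHermitian.cfc, det_map, det_diagonal, Function.comp_apply]
  rw [← RCLike.ofReal_prod, ← RCLike.ofReal_one, RCLike.ofReal_le_ofReal]
  exact Finset.one_le_prod fun i _ => le_add_of_nonneg_right (hM.eigenvalues_nonneg i)

lemma Matrix.PosSemidef.det_le_det_add {A B : Matrix n n 𝕜} (hA : A.PosSemidef)
    (hB : B.PosSemidef) : A.det ≤ (A + B).det := by
  by_cases hdet : A.det = 0
  · exact hdet ▸ (hA.add hB).det_nonneg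
  have hA_posDef : A.PosDef := hA.posDef_iff_det_ne_zero.mpr hdet
  obtain ⟨C, rfl⟩ := CStarAlgebra.nonneg_iff_eq_star_mul_self.mp hB.nonneg
  have hM : (C * A⁻¹ * Cᴴ).PosSemidef := hA_posDef.inv.posSemidef.mul_mul_conjTranspose_same C
  rw [star_eq_conjTranspose, det_add_mul _ _ (isUnit_iff_ne_zero.mpr hdet)]
  exact le_mul_of_one_le_right hA.det_nonneg hM.one_le_det_one_add

end DetMonotone

section JosephForm

variable {α n m : Type*} [CommRing α] [Fintype n] [Fintype m]

section KalmanGain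

variable [DecidableEq m]

noncomputable def kalmanGain (Pf : Matrix n n α) (R : Matrix m m α) (H : Matrix m n α) :
    Matrix n m α :=
  Pf * Hᵀ * (H * Pf * Hᵀ + R)⁻¹

lemma kalmanGain_mul {Pf : Matrix n n α} {R : Matrix m m α} {H : Matrix m n α}
    (h : IsUnit (H * Pf * Hᵀ + R).det) :
    kalmanGain Pf R H * (H * Pf * Hᵀ + R) = Pf * Hᵀ :=
  nonsing_inv_mul_cancel_right _ _ h

end KalmanGain

variable [DecidableEq n]

def josephCovariance (Pf : Matrix n n α) (R : Matrix m m α) (H : Matrix m n α)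
    (K : Matrix n m α) : Matrix n n α :=
  (1 - K * H) * Pf * (1 - K * H)ᵀ + K * R * Kᵀ

lemma josephCovariance_eq (Pf : Matrix n n α) (R : Matrix m m α) (H : Matrix m n α)
    (K : Matrix n m α) :
    josephCovariance Pf R H K =
      Pf - K * (H * Pf) - Pf * Hᵀ * Kᵀ + K * (H * Pf * Hᵀ + R) * Kᵀ := by
  simp only [josephCovariance, transpose_sub, transpose_one, transpose_mul, Matrix.sub_mul,
    Matrix.mul_sub, Matrix.add_mul, Matrix.mul_add, Matrix.mul_one, Matrix.one_mul,
    Matrix.mul_assoc]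
  abel

lemma josephCovariance_eq_add_of_mul_eq {Pf : Matrix n n α} {R : Matrix m m α}
    (hPf : Pf.IsSymm) (hR : R.IsSymm) (H : Matrix m n α) {K₀ : Matrix n m α}
    (hK₀ : K₀ * (H * Pf * Hᵀ + R) = Pf * Hᵀ) (K : Matrix n m α) :
    josephCovariance Pf R H K =
      josephCovariance Pf R H K₀ + (K - K₀) * (H * Pf * Hᵀ + R) * (K - K₀)ᵀ := by
  rw [josephCovariance_eq, josephCovariance_eq]
  set S := H * Pf * Hᵀ + R
  have hS : Sᵀ = S := by
    simp only [S, transpose_add, transpose_mul, transpose_transpose, hPf.eq, hR.eq,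
      Matrix.mul_assoc]
  have hSK₀ : S * K₀ᵀ = H * Pf := by
    simpa [transpose_mul, hS, hPf.eq] using congrArg transpose hK₀
  have hKSK₀ : K * S * K₀ᵀ = K * (H * Pf) := by rw [Matrix.mul_assoc, hSK₀]
  have hK₀SK₀ : K₀ * S * K₀ᵀ = K₀ * (H * Pf) := by rw [Matrix.mul_assoc, hSK₀]
  have hK₀SK : K₀ * S * Kᵀ = Pf * Hᵀ * Kᵀ := by rw [hK₀]
  have hPfK₀ : Pf * Hᵀ * K₀ᵀ = K₀ * (H * Pf) := by rw [← hK₀, Matrix.mul_assoc, hSK₀]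
  simp only [transpose_sub, Matrix.sub_mul, Matrix.mul_sub, hKSK₀, hK₀SK₀, hK₀SK, hPfK₀]
  abel

end JosephForm

section Real

variable {n m : Type*} [Fintype n] [Fintype m] [DecidableEq n]

lemma josephCovariance_posSemidef {Pf : Matrix n n ℝ} {R : Matrix m m ℝ} (hPf : Pf.PosSemidef)
    (hR : R.PosSemidef) (H : Matrix m n ℝ) (K : Matrix n m ℝ) :
    (josephCovariance Pf R H K).PosSemidef := by
  simp only [josephCovariance, ← conjTranspose_eq_transpose_of_trivial]
  exact (hPf.mul_mul_conjTranspose_same _).add (hR.mul_mul_conjTranspose_same _)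

lemma det_josephCovariance_kalmanGain_le [DecidableEq m] {Pf : Matrix n n ℝ}
    {R : Matrix m m ℝ} (hPf : Pf.PosSemidef) (hR : R.PosDef) (H : Matrix m n ℝ)
    (K : Matrix n m ℝ) :
    (josephCovariance Pf R H (kalmanGain Pf R H)).det ≤ (josephCovariance Pf R H K).det := by
  have hS : (H * Pf * Hᵀ + R).PosDef := by
    rw [← conjTranspose_eq_transpose_of_trivial]
    exact PosDef.posSemidef_add (hPf.mul_mul_conjTranspose_same H) hR
  rw [josephCovariance_eq_add_of_mul_eq (isHermitian_iff_isSymm.mp hPf.isHermitian)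
    (isHermitian_iff_isSymm.mp hR.isHermitian) H (kalmanGain_mul hS.det_pos.ne'.isUnit) K]
  refine (josephCovariance_posSemidef hPf hR.posSemidef H _).det_le_det_add ?_
  rw [← conjTranspose_eq_transpose_of_trivial]
  exact hS.posSemidef.mul_mul_conjTranspose_same _

end Real

theorem kalman_gain_minimizes_generalized_variance_general
    (n m : ℕ)
    (Pf : Matrix (Fin n) (Fin n) ℝ) (hPf : Pf.PosDef)
    (R : Matrix (Fin m) (Fin m) ℝ) (hR : R.PosDef)
    (H : Matrix (Fin m) (Fin n) ℝ)
    (Pa : Matrix (Fin n) (Fin m) ℝ → Matrix (Fin n) (Fin n) ℝ)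
    (hPa : ∀ K, Pa K = (1 - K * H) * Pf * (1 - K * H)ᵀ + K * R * Kᵀ)
    (Kstar : Matrix (Fin n) (Fin m) ℝ)
    (hKstar : Kstar = Pf * Hᵀ * (H * Pf * Hᵀ + R)⁻¹) :
    ∀ K : Matrix (Fin n) (Fin m) ℝ, (Pa Kstar).det ≤ (Pa K).det := by
  obtain rfl : Pa = josephCovariance Pf R H := funext hPa
  obtain rfl : Kstar = kalmanGain Pf R H := hKstar
  exact det_josephCovariance_kalmanGain_le hPf.posSemidef hR H

/-- The Kalman gain `K* = Pᶠ Hᵀ (H Pᶠ Hᵀ + R)⁻¹` minimizes the generalized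
variance, i.e. the determinant of the analysis error covariance matrix
`Pᵃ(K) = (I − K H) Pᶠ (I − K H)ᵀ + K R Kᵀ`, over all gain matrices `K`. -/
theorem kalman_gain_minimizes_generalized_variance
    (n m : ℕ) (hn : 0 < n) (hm : 0 < m)
    (Pf : Matrix (Fin n) (Fin n) ℝ) (hPf : Pf.PosDef)
    (R : Matrix (Fin m) (Fin m) ℝ) (hR : R.PosDef)
    (H : Matrix (Fin m) (Fin n) ℝ)
    (Pa : Matrix (Fin n) (Fin m) ℝ → Matrix (Fin n) (Fin n) ℝ)
    (hPa : ∀ K, Pa K = (1 - K * H) * Pf * (1 - K * H)ᵀ + K * R * Kᵀ)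
    (Kstar : Matrix (Fin n) (Fin m) ℝ)
    (hKstar : Kstar = Pf * Hᵀ * (H * Pf * Hᵀ + R)⁻¹) :
    ∀ K : Matrix (Fin n) (Fin m) ℝ, (Pa Kstar).det ≤ (Pa K).det :=
  kalman_gain_minimizes_generalized_variance_general n m Pf hPf R hR H Pa hPa Kstar hKstar
end

section
/- For an n×m real matrix K, the gradient of log(det(Pᵃ(K))) with respect to K, namely G(K) = (Pᵃ(K))⁻¹·(2·K·H·Pᶠ·Hᵀ + 2·K·R − 2·Pᶠ·Hᵀ), vanishes (G(K) = 0) if and only if K equals the Kalman gain K* = Pᶠ·Hᵀ·(H·Pᶠ·Hᵀ + R)⁻¹. -/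
/-!
`Pᵃ(K) = M Pᶠ Mᴴ + K R Kᴴ` with `M = I − K H` is positive definite because `[M K]` has the right
inverse `[I; H]`, so no nonzero vector lies in the kernels of both `Mᴴ` and `Kᴴ`. Hence `G(K) = 0`
iff `K (H Pᶠ Hᵀ + R) = Pᶠ Hᵀ`, and `H Pᶠ Hᵀ + R` is invertible.
-/

open Matrix

namespace Matrix

variable {n k l α : Type*} [Fintype n] [Fintype k] [Fintype l] [Ring α] [StarRing α]

lemma star_dotProduct_mul_mul_conjTranspose_mulVec (M : Matrix n k α) (A : Matrix k k α)
    (x : n → α) :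
    star x ⬝ᵥ (M * A * Mᴴ) *ᵥ x = star (Mᴴ *ᵥ x) ⬝ᵥ A *ᵥ (Mᴴ *ᵥ x) := by
  simp only [← mulVec_mulVec, star_mulVec, conjTranspose_conjTranspose, dotProduct_mulVec,
    vecMul_vecMul]

variable [PartialOrder α] [StarOrderedRing α] [DecidableEq n]

lemma PosDef.mul_mul_conjTranspose_add_mul_mul_conjTranspose {A : Matrix k k α}
    {B : Matrix l l α} (hA : A.PosDef) (hB : B.PosDef) {M : Matrix n k α} {N : Matrix n l α}
    (X : Matrix k n α) (Y : Matrix l n α) (hMN : M * X + N * Y = 1) :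
    (M * A * Mᴴ + N * B * Nᴴ).PosDef := by
  have hMA := hA.posSemidef.mul_mul_conjTranspose_same M
  have hNB := hB.posSemidef.mul_mul_conjTranspose_same N
  refine PosDef.of_dotProduct_mulVec_pos (hMA.isHermitian.add hNB.isHermitian) fun x hx => ?_
  have hMx_or_hNx : Mᴴ *ᵥ x ≠ 0 ∨ Nᴴ *ᵥ x ≠ 0 := by
    by_contra! h
    apply hx
    calc x = (M * X + N * Y)ᴴ *ᵥ x := by rw [hMN, conjTranspose_one, one_mulVec]
      _ = Xᴴ *ᵥ (Mᴴ *ᵥ x) + Yᴴ *ᵥ (Nᴴ *ᵥ x) := by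
        simp only [conjTranspose_add, conjTranspose_mul, add_mulVec, mulVec_mulVec]
      _ = 0 := by simp only [h.1, h.2, mulVec_zero, add_zero]
  rw [add_mulVec, dotProduct_add, star_dotProduct_mul_mul_conjTranspose_mulVec,
    star_dotProduct_mul_mul_conjTranspose_mulVec]
  rcases hMx_or_hNx with hMx | hNx
  · exact add_pos_of_pos_of_nonneg (hA.dotProduct_mulVec_pos hMx)
      (hB.posSemidef.dotProduct_mulVec_nonneg _)
  · exact add_pos_of_nonneg_of_pos (hA.posSemidef.dotProduct_mulVec_nonneg _)
      (hB.dotProduct_mulVec_pos hNx)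

lemma PosDef.one_sub_mul_mul_conjTranspose_add_mul_mul_conjTranspose {P : Matrix n n α}
    {R : Matrix k k α} (hP : P.PosDef) (hR : R.PosDef) (H : Matrix k n α) (K : Matrix n k α) :
    ((1 - K * H) * P * (1 - K * H)ᴴ + K * R * Kᴴ).PosDef :=
  hP.mul_mul_conjTranspose_add_mul_mul_conjTranspose hR 1 H (by noncomm_ring)

end Matrix

theorem gradient_vanishes_iff_kalman_gain_general
    (n m : ℕ)
    (Pf : Matrix (Fin n) (Fin n) ℝ) (hPf : Pf.PosDef)
    (R : Matrix (Fin m) (Fin m) ℝ) (hR : R.PosDef)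
    (H : Matrix (Fin m) (Fin n) ℝ)
    (Pa : Matrix (Fin n) (Fin m) ℝ → Matrix (Fin n) (Fin n) ℝ)
    (hPa : ∀ K, Pa K = (1 - K * H) * Pf * (1 - K * H)ᵀ + K * R * Kᵀ)
    (Kstar : Matrix (Fin n) (Fin m) ℝ)
    (hKstar : Kstar = Pf * Hᵀ * (H * Pf * Hᵀ + R)⁻¹) :
    ∀ K : Matrix (Fin n) (Fin m) ℝ,
      (Pa K)⁻¹ * ((2 : ℝ) • (K * H * Pf * Hᵀ) + (2 : ℝ) • (K * R)
          - (2 : ℝ) • (Pf * Hᵀ)) = 0 ↔ K = Kstar := by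
  intro K
  simp only [← conjTranspose_eq_transpose_of_trivial] at hPa hKstar ⊢
  have hS : (H * Pf * Hᴴ + R).PosDef :=
    PosDef.posSemidef_add (hPf.posSemidef.mul_mul_conjTranspose_same H) hR
  have hPaK : (Pa K).PosDef :=
    hPa K ▸ hPf.one_sub_mul_mul_conjTranspose_add_mul_mul_conjTranspose hR H K
  have hgrad : (2 : ℝ) • (K * H * Pf * Hᴴ) + (2 : ℝ) • (K * R) - (2 : ℝ) • (Pf * Hᴴ)
      = (2 : ℝ) • (K * (H * Pf * Hᴴ + R) - Pf * Hᴴ) := by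
    simp only [Matrix.mul_add, smul_sub, smul_add, Matrix.mul_assoc]
  have := hS.isUnit.invertible
  have := hPaK.isUnit.invertible
  rw [hgrad, inv_mul_eq_iff_eq_mul_of_invertible, Matrix.mul_zero,
    smul_eq_zero_iff_right two_ne_zero, sub_eq_zero, hKstar, eq_comm (a := K),
    mul_inv_eq_iff_eq_mul_of_invertible, eq_comm]

/-- The gradient of `log (det (Pᵃ(K)))` with respect to `K`, namely
`G(K) = (Pᵃ(K))⁻¹ (2 K H Pᶠ Hᵀ + 2 K R − 2 Pᶠ Hᵀ)`, vanishes if and only if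
`K` is the Kalman gain `K* = Pᶠ Hᵀ (H Pᶠ Hᵀ + R)⁻¹`, where
`Pᵃ(K) = (I − K H) Pᶠ (I − K H)ᵀ + K R Kᵀ`. -/
theorem gradient_vanishes_iff_kalman_gain
    (n m : ℕ) (hn : 0 < n) (hm : 0 < m)
    (Pf : Matrix (Fin n) (Fin n) ℝ) (hPf : Pf.PosDef)
    (R : Matrix (Fin m) (Fin m) ℝ) (hR : R.PosDef)
    (H : Matrix (Fin m) (Fin n) ℝ)
    (Pa : Matrix (Fin n) (Fin m) ℝ → Matrix (Fin n) (Fin n) ℝ)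
    (hPa : ∀ K, Pa K = (1 - K * H) * Pf * (1 - K * H)ᵀ + K * R * Kᵀ)
    (Kstar : Matrix (Fin n) (Fin m) ℝ)
    (hKstar : Kstar = Pf * Hᵀ * (H * Pf * Hᵀ + R)⁻¹) :
    ∀ K : Matrix (Fin n) (Fin m) ℝ,
      (Pa K)⁻¹ * ((2 : ℝ) • (K * H * Pf * Hᵀ) + (2 : ℝ) • (K * R)
          - (2 : ℝ) • (Pf * Hᵀ)) = 0 ↔ K = Kstar :=
  gradient_vanishes_iff_kalman_gain_general n m Pf hPf R hR H Pa hPa Kstar hKstar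
end
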